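/- arXiv:1602.06594 — 7 statements merged into one kernel-verified Lean document; each statement's English description precedes it below -/
import Mathlib

section
/- Suppose the system Σ is observable and the received trajectory r : ℕ → ℂ^N satisfies r = y₁ + η₁ for some y₁ in the behavior B and some attack trajectory η₁ with ‖η₁‖ < δ(Σ)/2. Then y₁ is the unique minimizer of ‖r − y‖ over y ∈ B: for every y ∈ B with y ≠ y₁ one has ‖r − y₁‖ < ‖r − y‖. In particular, if r = y₂ + η₂ with y₂ ∈ B and ‖η₂‖ < δ(Σ)/2, then y₂ = y₁. -/
open Matrix

/-- The behavior of the LTI system Σ = (A, C): all output trajectories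
`y(t) = C A^t x₀` for some initial condition `x₀`. -/
def behavior {n N : ℕ} (A : Matrix (Fin n) (Fin n) ℂ) (C : Matrix (Fin N) (Fin n) ℂ) :
    Set (ℕ → Fin N → ℂ) :=
  { y | ∃ x₀ : Fin n → ℂ, ∀ t, y t = (C * A ^ t).mulVec x₀ }

/-- Observability of Σ = (A, C): the map `x₀ ↦ (C A^t x₀)ₜ` is injective. -/
def Observable {n N : ℕ} (A : Matrix (Fin n) (Fin n) ℂ) (C : Matrix (Fin N) (Fin n) ℂ) : Prop :=
  Function.Injective (fun x₀ : Fin n → ℂ => fun t : ℕ => (C * A ^ t).mulVec x₀)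

/-- The weight `‖y‖` of a trajectory: the number of component trajectories
that are not identically zero. -/
noncomputable def weight {N : ℕ} (y : ℕ → Fin N → ℂ) : ℕ :=
  Set.ncard {i : Fin N | ∃ t, y t i ≠ 0}

/-- The security index `δ(Σ) = min { ‖y‖ : y ∈ B, y ≠ 0 }`. -/
noncomputable def secIndex {n N : ℕ} (A : Matrix (Fin n) (Fin n) ℂ)
    (C : Matrix (Fin N) (Fin n) ℂ) : ℕ :=
  sInf {w : ℕ | ∃ y ∈ behavior A C, y ≠ 0 ∧ w = weight y}

lemma behavior_sub {n N : ℕ} {A : Matrix (Fin n) (Fin n) ℂ} {C : Matrix (Fin N) (Fin n) ℂ}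
    {y z : ℕ → Fin N → ℂ} (hy : y ∈ behavior A C) (hz : z ∈ behavior A C) :
    y - z ∈ behavior A C := by
  obtain ⟨x₁, h₁⟩ := hy
  obtain ⟨x₂, h₂⟩ := hz
  exact ⟨x₁ - x₂, fun t => by simp [h₁ t, h₂ t, Matrix.mulVec_sub]⟩

lemma weight_sub_le {N : ℕ} (a b : ℕ → Fin N → ℂ) :
    weight (a - b) ≤ weight a + weight b := by
  unfold weight
  refine le_trans (Set.ncard_le_ncard ?_ (Set.toFinite _)) (Set.ncard_union_le _ _)
  intro i hi
  obtain ⟨t, ht⟩ := hi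
  by_contra h
  simp only [Set.mem_union, Set.mem_setOf_eq, not_or, not_exists, not_not] at h
  exact ht (by simp [h.1 t, h.2 t])

lemma secIndex_le {n N : ℕ} {A : Matrix (Fin n) (Fin n) ℂ} {C : Matrix (Fin N) (Fin n) ℂ}
    {z : ℕ → Fin N → ℂ} (hz : z ∈ behavior A C) (hne : z ≠ 0) :
    secIndex A C ≤ weight z :=
  Nat.sInf_le ⟨z, hz, hne, rfl⟩

/-- Theorem 2 (attack correction): if `r = y₁ + η₁` with `y₁ ∈ B` and
`‖η₁‖ < δ(Σ)/2`, then `y₁` is the unique minimizer of `‖r - y‖` over `y ∈ B`;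
in particular any other decomposition `r = y₂ + η₂` with `y₂ ∈ B` and
`‖η₂‖ < δ(Σ)/2` satisfies `y₂ = y₁`. -/
theorem attack_correction {n N : ℕ} (A : Matrix (Fin n) (Fin n) ℂ)
    (C : Matrix (Fin N) (Fin n) ℂ) (hobs : Observable A C)
    (r y₁ η₁ : ℕ → Fin N → ℂ) (hy₁ : y₁ ∈ behavior A C) (hr : r = y₁ + η₁)
    (hη₁ : 2 * weight η₁ < secIndex A C) :
    (∀ y ∈ behavior A C, y ≠ y₁ → weight (r - y₁) < weight (r - y)) ∧
      (∀ y₂ η₂ : ℕ → Fin N → ℂ, y₂ ∈ behavior A C → r = y₂ + η₂ →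
        2 * weight η₂ < secIndex A C → y₂ = y₁) := by
  have hrη : r - y₁ = η₁ := by rw [hr]; abel
  constructor
  · intro y hy hne
    have hd : y₁ - y ∈ behavior A C := behavior_sub hy₁ hy
    have hdne : y₁ - y ≠ 0 := sub_ne_zero.mpr (Ne.symm hne)
    have h1 : secIndex A C ≤ weight (y₁ - y) := secIndex_le hd hdne
    have h2 : weight (y₁ - y) ≤ weight (r - y) + weight η₁ := by
      have : y₁ - y = (r - y) - η₁ := by rw [hr]; abel
      rw [this]; exact weight_sub_le _ _
    rw [hrη]
    omega
  · intro y₂ η₂ hy₂ hr₂ hη₂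
    have hd : y₂ - y₁ ∈ behavior A C := behavior_sub hy₂ hy₁
    have h2 : weight (y₂ - y₁) ≤ weight η₁ + weight η₂ := by
      have : y₂ - y₁ = η₁ - η₂ := by
        have heq : y₁ + η₁ = y₂ + η₂ := by rw [← hr, hr₂]
        exact sub_eq_sub_iff_add_eq_add.mpr (by rw [← heq, add_comm])
      rw [this]; exact weight_sub_le _ _
    by_contra hne
    have hdne : y₂ - y₁ ≠ 0 := sub_ne_zero.mpr hne
    have h1 : secIndex A C ≤ weight (y₂ - y₁) := secIndex_le hd hdne
    omega
end

section
/- Suppose the system Σ is observable. Let H ∈ ℂ^{n(N−1)×nN} be any check matrix of Σ, i.e., H has full rank n(N−1) and H G = 0, where G ∈ ℂ^{nN×n} is the coding matrix. Then δ(Σ) = spark(H), where spark(H) is the smallest integer L ∈ {1,…,N} for which there exists a subset J ⊆ {1,…,N} of cardinality L such that ker H_J ≠ {0}. -/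
open Matrix

/-- The coding matrix `G` of Σ = (A, C): rows indexed by pairs `(i, k)`
(sensor `i`, power `k ∈ {0,…,n-1}`), with row `(i,k)` equal to `C_i A^k`.
This is the vertical stacking of the blocks `G_1, …, G_N`. -/
noncomputable def codingMatrix {n N : ℕ} (A : Matrix (Fin n) (Fin n) ℂ)
    (C : Matrix (Fin N) (Fin n) ℂ) : Matrix (Fin N × Fin n) (Fin n) ℂ :=
  fun p j => (C * A ^ (p.2 : ℕ)) p.1 j

open Polynomial

lemma sum_mulVec' {m' n' ι : Type*} [Fintype n'] (s : Finset ι)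
    (M : ι → Matrix m' n' ℂ) (x : n' → ℂ) :
    (∑ i ∈ s, M i).mulVec x = ∑ i ∈ s, (M i).mulVec x := by
  ext j
  simp [Matrix.mulVec, dotProduct, Finset.sum_apply, Finset.sum_mul, Matrix.sum_apply]
  rw [Finset.sum_comm]

lemma CH_aux {n N : ℕ} (A : Matrix (Fin n) (Fin n) ℂ) (C : Matrix (Fin N) (Fin n) ℂ)
    (x : Fin n → ℂ) (h : ∀ k, k < n → (C * A ^ k).mulVec x = 0) (t : ℕ) :
    (C * A ^ t).mulVec x = 0 := by
  rcases Nat.eq_zero_or_pos n with hn | hn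
  · subst hn
    ext i
    simp [Matrix.mulVec, dotProduct]
  · have hdim : Fintype.card (Fin n) = n := Fintype.card_fin n
    have hAt : A ^ t = aeval A ((X : ℂ[X]) ^ t %ₘ A.charpoly) := by
      have := A.pow_eq_aeval_mod_charpoly t
      simpa using this
    set q : ℂ[X] := (X : ℂ[X]) ^ t %ₘ A.charpoly with hq
    have hqd : q.natDegree < n := by
      have h1 : A.charpoly ≠ 1 := by
        intro h1
        have := A.charpoly_natDegree_eq_dim
        rw [h1] at this
        simp [hdim] at this
        omega
      have := Polynomial.natDegree_modByMonic_lt ((X : ℂ[X]) ^ t) A.charpoly_monic h1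
      rwa [A.charpoly_natDegree_eq_dim, hdim] at this
    rw [hAt, Polynomial.aeval_eq_sum_range' hqd]
    rw [Matrix.mul_sum]
    have : ∀ i ∈ Finset.range n, C * (q.coeff i • A ^ i) = q.coeff i • (C * A ^ i) := by
      intro i _
      rw [Matrix.mul_smul]
    rw [Finset.sum_congr rfl this, sum_mulVec']
    refine Finset.sum_eq_zero fun i hi => ?_
    rw [Matrix.smul_mulVec, h i (Finset.mem_range.mp hi), smul_zero]

lemma CH_pt {n N : ℕ} (A : Matrix (Fin n) (Fin n) ℂ) (C : Matrix (Fin N) (Fin n) ℂ)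
    (x : Fin n → ℂ) (i : Fin N) (h : ∀ k, k < n → ((C * A ^ k).mulVec x) i = 0) (t : ℕ) :
    ((C * A ^ t).mulVec x) i = 0 := by
  set C' : Matrix (Fin 1) (Fin n) ℂ := Matrix.of fun _ j => C i j with hC'
  have key : ∀ m : ℕ, ((C' * A ^ m).mulVec x) 0 = ((C * A ^ m).mulVec x) i := by
    intro m
    simp [hC', Matrix.mulVec, dotProduct, Matrix.mul_apply]
  have h' : ∀ k, k < n → (C' * A ^ k).mulVec x = 0 := by
    intro k hk
    funext z
    have hz : z = 0 := Subsingleton.elim z 0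
    rw [hz, key k, h k hk]
    rfl
  have := CH_aux A C' x h' t
  have := congrFun this 0
  rw [key t] at this
  simpa using this


/-- Theorem 4: for any check matrix `H` (full row rank `n(N-1)` with `H G = 0`,
columns blocked as `H = [H_1 ⋯ H_N]` where `H_i` consists of the columns with
first index `i`), the security index equals `spark(H)`: the smallest
`L ∈ {1,…,N}` for which some `J ⊆ {1,…,N}` with `|J| = L` has `ker H_J ≠ {0}`,
i.e. there is `v ≠ 0` supported on the column blocks in `J` with `H v = 0`. -/
theorem secIndex_eq_spark {n N : ℕ} (hN : 1 ≤ N) (A : Matrix (Fin n) (Fin n) ℂ)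
    (C : Matrix (Fin N) (Fin n) ℂ) (hobs : Observable A C)
    (H : Matrix (Fin (n * (N - 1))) (Fin N × Fin n) ℂ)
    (hrank : H.rank = n * (N - 1)) (hHG : H * codingMatrix A C = 0) :
    secIndex A C =
      sInf {L : ℕ | 1 ≤ L ∧ ∃ J : Finset (Fin N), J.card = L ∧
        ∃ v : Fin N × Fin n → ℂ, v ≠ 0 ∧ (∀ p : Fin N × Fin n, p.1 ∉ J → v p = 0) ∧
          H.mulVec v = 0} := by
  classical
  set G := codingMatrix A C with hG
  -- pointwise value of G.mulVec
  have hGmv : ∀ (x : Fin n → ℂ) (p : Fin N × Fin n),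
      G.mulVec x p = ((C * A ^ (p.2 : ℕ)).mulVec x) p.1 := fun x p => rfl
  -- injectivity of G
  have injG : Function.Injective G.mulVecLin := by
    rw [← LinearMap.ker_eq_bot, LinearMap.ker_eq_bot']
    intro x hx
    have hx' : G.mulVec x = 0 := hx
    have hk : ∀ k, k < n → (C * A ^ k).mulVec x = 0 := by
      intro k hk
      funext i
      have := congrFun hx' (i, ⟨k, hk⟩)
      rw [hGmv] at this
      exact this
    have hall : (fun t : ℕ => (C * A ^ t).mulVec x) = fun t : ℕ => (C * A ^ t).mulVec 0 := by
      funext t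
      rw [CH_aux A C x hk t, Matrix.mulVec_zero]
    exact hobs hall
  -- range G ≤ ker H
  have hle : LinearMap.range G.mulVecLin ≤ LinearMap.ker H.mulVecLin := by
    rintro v ⟨x, rfl⟩
    simp only [LinearMap.mem_ker, Matrix.mulVecLin_apply]
    rw [Matrix.mulVec_mulVec, hHG, Matrix.zero_mulVec]
  -- finrank computations
  have hrange : Module.finrank ℂ (LinearMap.range G.mulVecLin) = n := by
    rw [LinearMap.finrank_range_of_inj injG, Module.finrank_fintype_fun_eq_card,
      Fintype.card_fin]
  have hker : Module.finrank ℂ (LinearMap.ker H.mulVecLin) = n := by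
    have h1 := LinearMap.finrank_range_add_finrank_ker H.mulVecLin
    rw [Module.finrank_fintype_fun_eq_card] at h1
    have h2 : Module.finrank ℂ (LinearMap.range H.mulVecLin) = n * (N - 1) := hrank
    rw [h2] at h1
    have h3 : Fintype.card (Fin N × Fin n) = N * n := by simp
    rw [h3] at h1
    have h4 : n * (N - 1) + n = N * n := by
      have : N - 1 + 1 = N := Nat.succ_pred_eq_of_pos hN
      calc n * (N - 1) + n = n * (N - 1 + 1) := by ring
        _ = n * N := by rw [this]
        _ = N * n := by ring
    omega
  have heq : LinearMap.range G.mulVecLin = LinearMap.ker H.mulVecLin :=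
    Submodule.eq_of_le_of_finrank_le hle (by rw [hker, hrange])
  -- the two sets
  set S1 := {w : ℕ | ∃ y ∈ behavior A C, y ≠ 0 ∧ w = weight y} with hS1
  set S2 := {L : ℕ | 1 ≤ L ∧ ∃ J : Finset (Fin N), J.card = L ∧
      ∃ v : Fin N × Fin n → ℂ, v ≠ 0 ∧ (∀ p : Fin N × Fin n, p.1 ∉ J → v p = 0) ∧
        H.mulVec v = 0} with hS2
  have hsub : S1 ⊆ S2 := by
    rintro w ⟨y, ⟨x₀, hy⟩, hy0, rfl⟩
    set sSet := {i : Fin N | ∃ t, y t i ≠ 0} with hsSet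
    have hfin : sSet.Finite := Set.toFinite _
    set J := hfin.toFinset with hJ
    have hJcard : J.card = weight y := by
      rw [weight, Set.ncard_eq_toFinset_card sSet hfin]
    set v := G.mulVec x₀ with hv
    have hvy : ∀ p : Fin N × Fin n, v p = y (p.2 : ℕ) p.1 := by
      intro p
      rw [hv, hGmv, hy]
    -- v ≠ 0
    obtain ⟨t, i, hti⟩ : ∃ t i, y t i ≠ 0 := by
      by_contra hc
      push_neg at hc
      exact hy0 (funext fun t => funext fun i => hc t i)
    have hti' : ((C * A ^ t).mulVec x₀) i ≠ 0 := by rwa [← hy]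
    have hvne : v ≠ 0 := by
      intro hv0
      apply hti'
      apply CH_pt A C x₀ i _ t
      intro k hk
      have h2 : ((C * A ^ k).mulVec x₀) i = v (i, ⟨k, hk⟩) := rfl
      rw [h2]
      simpa using congrFun hv0 (i, ⟨k, hk⟩)
    refine ⟨?_, J, hJcard, v, hvne, ?_, ?_⟩
    · -- 1 ≤ weight y
      have hiJ : i ∈ sSet := ⟨t, hti⟩
      have : J.Nonempty := ⟨i, hfin.mem_toFinset.mpr hiJ⟩
      rw [← hJcard] at *
      exact Finset.card_pos.mpr this
    · intro p hp
      rw [hvy]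
      by_contra hne
      exact hp (hfin.mem_toFinset.mpr ⟨(p.2 : ℕ), hne⟩)
    · rw [hv, Matrix.mulVec_mulVec, hHG, Matrix.zero_mulVec]
  have hred : ∀ L ∈ S2, ∃ w ∈ S1, w ≤ L := by
    rintro L ⟨hL1, J, hJcard, v, hv0, hsupp, hHv⟩
    have hvker : v ∈ LinearMap.ker H.mulVecLin := hHv
    rw [← heq] at hvker
    obtain ⟨x₀, hx₀⟩ := hvker
    have hx₀v : G.mulVec x₀ = v := hx₀
    set y : ℕ → Fin N → ℂ := fun t => (C * A ^ t).mulVec x₀ with hy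
    have hyB : y ∈ behavior A C := ⟨x₀, fun t => rfl⟩
    have hx₀ne : x₀ ≠ 0 := by
      intro h0
      apply hv0
      rw [← hx₀v, h0, Matrix.mulVec_zero]
    have hyne : y ≠ 0 := by
      intro h0
      apply hx₀ne
      apply hobs
      show (fun t : ℕ => (C * A ^ t).mulVec x₀) = fun t : ℕ => (C * A ^ t).mulVec 0
      funext t
      rw [Matrix.mulVec_zero]
      exact congrFun h0 t
    refine ⟨weight y, ⟨y, hyB, hyne, rfl⟩, ?_⟩
    rw [← hJcard]
    have hsubJ : {i : Fin N | ∃ t, y t i ≠ 0} ⊆ (J : Set (Fin N)) := by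
      rintro i ⟨t, hti⟩
      by_contra hiJ
      apply hti
      apply CH_pt A C x₀ i _ t
      intro k hk
      have := hsupp (i, ⟨k, hk⟩) hiJ
      rw [← hx₀v] at this
      exact this
    calc weight y ≤ (J : Set (Fin N)).ncard := Set.ncard_le_ncard hsubJ (Set.toFinite _)
      _ = J.card := Set.ncard_coe_finset J
  -- conclude
  apply le_antisymm
  · rcases Set.eq_empty_or_nonempty S2 with h2 | h2
    · have h1 : S1 = ∅ := Set.eq_empty_of_subset_empty (h2 ▸ hsub)
      rw [secIndex, ← hS1, h1, h2]
    · obtain ⟨w, hw, hwle⟩ := hred _ (Nat.sInf_mem h2)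
      exact le_trans (Nat.sInf_le hw) hwle
  · rcases Set.eq_empty_or_nonempty S1 with h1 | h1
    · have h2 : S2 = ∅ := by
        by_contra h2
        obtain ⟨w, hw, _⟩ := hred _ (Nat.sInf_mem (Set.nonempty_iff_ne_empty.mpr h2))
        rw [h1] at hw
        exact hw
      rw [secIndex, ← hS1, h1, h2]
    · exact Nat.sInf_le (hsub (Nat.sInf_mem h1))
end

section
/- Suppose the system Σ is observable and let R(ξ) be an N×N polynomial matrix over ℂ such that the behavior B equals the set of trajectories y : ℕ → ℂ^N with R(σ)y = 0. Then δ(Σ) equals the smallest integer L ∈ {1,…,N} for which there exists a subset J ⊆ {1,…,N} of cardinality L such that the N×L submatrix R_J(ξ), consisting of the columns of R(ξ) with indices in J, is not left unimodular (i.e., has no polynomial left inverse). -/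
open Matrix

/-- The action `R(σ) y` of a polynomial matrix `R(ξ)` on a trajectory `y`,
where `σ` is the left shift: `(R(σ)y)_i(t) = Σ_j Σ_k (R_{ij})_k · y_j(t+k)`. -/
noncomputable def polyAct {N : ℕ} (R : Matrix (Fin N) (Fin N) (Polynomial ℂ))
    (y : ℕ → Fin N → ℂ) : ℕ → Fin N → ℂ :=
  fun t i => ∑ j, (R i j).sum fun k a => a * y (t + k) j


/-!
If `y` is a nonzero trajectory of the behavior with support `J`, its `J`-columns form a nonzero
solution of `R_J(σ) z = 0`; a polynomial left inverse `S` of `R_J` would give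
`z = S(σ) R_J(σ) z = 0`, so `R_J` is not left unimodular and `|J| = ‖y‖`.
Conversely, if `R_J` has no polynomial left inverse, its maximal minors generate a proper ideal
of the principal ideal domain `ℂ[X]`, so they have a common root `λ`. Then `R_J(λ)` has a nonzero
kernel vector `v`, and the geometric trajectory `t ↦ λ^t v` lies in the behavior, with weight at
most `|J|`.
-/

open Polynomial

namespace Matrix

variable {I J L R K E : Type*}

section SMulVec

variable [Semiring R] [AddCommMonoid E] [Module R E]

def smulVec [Fintype J] (M : Matrix I J R) (v : J → E) : I → E :=
  fun i => ∑ j, M i j • v j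

theorem one_smulVec [Fintype J] [DecidableEq J] (v : J → E) :
    (1 : Matrix J J R).smulVec v = v := by
  funext j
  simp [smulVec, one_apply, ite_smul]

theorem mul_smulVec [Fintype I] [Fintype J] (S : Matrix L I R) (M : Matrix I J R) (v : J → E) :
    (S * M).smulVec v = S.smulVec (M.smulVec v) := by
  funext l
  simp only [smulVec, mul_apply, Finset.sum_smul, Finset.smul_sum, mul_smul]
  exact Finset.sum_comm

theorem smulVec_zero [Fintype J] (M : Matrix I J R) : M.smulVec (0 : J → E) = 0 := by
  funext i
  simp [smulVec]

theorem smulVec_eq_mulVec [Fintype J] (M : Matrix I J R) (v : J → R) : M.smulVec v = M *ᵥ v :=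
  rfl

theorem eq_zero_of_smulVec_eq_zero [Fintype I] [Fintype J] [DecidableEq J] {S : Matrix J I R}
    {M : Matrix I J R} (hSM : S * M = 1) {v : J → E} (hv : M.smulVec v = 0) : v = 0 := by
  rw [← one_smulVec (R := R) v, ← hSM, mul_smulVec, hv, smulVec_zero]

theorem submatrix_val_smulVec [Fintype J] (M : Matrix I J R) (s : Finset J) {v : J → E}
    (hv : ∀ j ∉ s, v j = 0) :
    (M.submatrix id ((↑) : s → J)).smulVec (fun j => v j) = M.smulVec v := by
  funext i
  simp only [smulVec, submatrix_apply, id_eq]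
  rw [Finset.sum_coe_sort s (fun j => M i j • v j)]
  exact Finset.sum_subset (Finset.subset_univ s) fun j _ hj => by rw [hv j hj, smul_zero]

end SMulVec

theorem exists_mul_eq_one_of_span_det_submatrix_eq_top [CommRing R] [Fintype I] [Fintype J]
    [DecidableEq I] [DecidableEq J] (M : Matrix I J R)
    (h : Ideal.span (Set.range fun r : J → I => (M.submatrix r id).det) = ⊤) :
    ∃ S : Matrix J I R, S * M = 1 := by
  obtain ⟨c, hc⟩ := (Submodule.mem_span_range_iff_exists_fun R).1 (h ▸ Submodule.mem_top (x := 1))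
  -- `adj(M_r) * M_r = det(M_r) • 1` for every square row-submatrix `M_r`
  refine ⟨∑ r, c r • ((M.submatrix r id).adjugate * (1 : Matrix I I R).submatrix r id), ?_⟩
  have hrow (r : J → I) : (1 : Matrix I I R).submatrix r id * M = M.submatrix r id := by
    simpa using (submatrix_mul 1 M r id id Function.bijective_id).symm
  simp only [Matrix.sum_mul, smul_mul, Matrix.mul_assoc, hrow, adjugate_mul, smul_smul]
  rw [← Finset.sum_smul]
  simpa using congrArg (· • (1 : Matrix J J R)) hc

theorem exists_det_submatrix_ne_zero_of_injective [Field K] [Finite I] [Fintype J]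
    [DecidableEq J] (V : Matrix I J K) (h : Function.Injective V.mulVec) :
    ∃ r : J → I, (V.submatrix r id).det ≠ 0 := by
  have hspan : Submodule.span K (Set.range V.row) = ⊤ := by
    apply Submodule.eq_top_of_finrank_eq
    rw [← rank_eq_finrank_span_row, rank, LinearMap.finrank_range_of_inj h,
      Module.finrank_fintype_fun_eq_card]
  obtain ⟨κ, a, -, hspa, hli⟩ := exists_linearIndependent' K V.row
  let b : Module.Basis κ K (J → K) := .mk hli (by rw [hspa, hspan])
  have : Fintype κ := FiniteDimensional.fintypeBasisIndex b
  let e : κ ≃ J := b.indexEquiv (Pi.basisFun K J)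
  refine ⟨a ∘ e.symm, ?_⟩
  rw [← isUnit_iff_ne_zero, ← isUnit_iff_isUnit_det, ← linearIndependent_rows_iff_isUnit]
  exact hli.comp _ e.symm.injective

theorem exists_mulVec_eval_eq_zero_of_not_exists_mul_eq_one [Field K] [IsAlgClosed K]
    [Fintype I] [Fintype J] [DecidableEq I] [DecidableEq J] (M : Matrix I J K[X])
    (hM : ¬ ∃ S : Matrix J I K[X], S * M = 1) :
    ∃ (x : K) (v : J → K), v ≠ 0 ∧ M.map (eval x) *ᵥ v = 0 := by
  set minors := Ideal.span (Set.range fun r : J → I => (M.submatrix r id).det)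
  obtain ⟨g, hg⟩ := Submodule.IsPrincipal.principal minors
  have hg_unit : ¬ IsUnit g := fun hu =>
    hM <| exists_mul_eq_one_of_span_det_submatrix_eq_top M <|
      hg.trans (Ideal.span_singleton_eq_top.2 hu)
  -- a generator of the ideal of maximal minors is a nonunit, so it has a root, common to all minors
  obtain ⟨x, hx⟩ := IsAlgClosed.exists_root g fun h => hg_unit (isUnit_iff_degree_eq_zero.2 h)
  have hminors (r : J → I) : ((M.map (eval x)).submatrix r id).det = 0 := by
    have hr : (M.submatrix r id).det ∈ minors := Ideal.subset_span ⟨r, rfl⟩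
    rw [hg] at hr
    obtain ⟨q, hq⟩ := Submodule.mem_span_singleton.1 hr
    rw [submatrix_map, ← coe_evalRingHom, ← RingHom.mapMatrix_apply, ← RingHom.map_det, ← hq,
      smul_eq_mul, map_mul, coe_evalRingHom, hx.eq_zero, mul_zero]
  have hker : LinearMap.ker (M.map (eval x)).mulVecLin ≠ ⊥ := fun hbot =>
    (exists_det_submatrix_ne_zero_of_injective _ (LinearMap.ker_eq_bot.1 hbot)).elim
      fun r hr => hr (hminors r)
  obtain ⟨v, hv, hv0⟩ := (Submodule.ne_bot_iff _).1 hker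
  exact ⟨x, v, hv0, hv⟩

end Matrix

section LeftShift

variable {K : Type*} [CommSemiring K]

def leftShift : Module.End K (ℕ → K) := LinearMap.funLeft K K (· + 1)

theorem leftShift_pow_apply (k : ℕ) (z : ℕ → K) (t : ℕ) : (leftShift ^ k) z t = z (t + k) := by
  induction k generalizing z t with
  | zero => rfl
  | succ k ih => rw [pow_succ, Module.End.mul_apply, ih]; rfl

theorem aeval_leftShift_apply (p : K[X]) (z : ℕ → K) (t : ℕ) :
    aeval leftShift p z t = p.sum fun k a => a * z (t + k) := by
  conv_lhs => rw [p.as_sum_support_C_mul_X_pow]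
  simp [Polynomial.sum_def, leftShift_pow_apply, Module.algebraMap_end_apply]

end LeftShift

/-- `R(σ)` is `R` evaluated at the shift, acting on the columns `j ↦ y_j` of `y`. -/
theorem polyAct_apply {N : ℕ} (R : Matrix (Fin N) (Fin N) ℂ[X]) (y : ℕ → Fin N → ℂ) (t : ℕ)
    (i : Fin N) :
    polyAct R y t i = (R.map (aeval (leftShift (K := ℂ)))).smulVec (fun j s => y s j) i t := by
  simp [polyAct, Matrix.smulVec, Finset.sum_apply, aeval_leftShift_apply]

theorem polyAct_geometric {N : ℕ} (R : Matrix (Fin N) (Fin N) ℂ[X]) (x : ℂ) (v : Fin N → ℂ) :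
    polyAct R (fun t i => x ^ t * v i) = fun t i => x ^ t * (R.map (eval x) *ᵥ v) i := by
  funext t i
  simp only [polyAct, mulVec, dotProduct, Matrix.map_apply, Finset.mul_sum, eval_eq_sum,
    Polynomial.sum_def, Finset.sum_mul]
  refine Finset.sum_congr rfl fun j _ => Finset.sum_congr rfl fun k _ => ?_
  ring

section Trajectory

variable {N : ℕ}

open scoped Classical in
noncomputable def trajSupport (y : ℕ → Fin N → ℂ) : Finset (Fin N) := {i | ∃ t, y t i ≠ 0}

theorem mem_trajSupport {y : ℕ → Fin N → ℂ} {i : Fin N} : i ∈ trajSupport y ↔ ∃ t, y t i ≠ 0 := by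
  simp [trajSupport]

theorem weight_eq_card_trajSupport (y : ℕ → Fin N → ℂ) : weight y = (trajSupport y).card := by
  rw [weight, ← Set.ncard_coe_finset]
  congr
  ext
  simp [mem_trajSupport]

theorem weight_le_card_of_forall_notMem {y : ℕ → Fin N → ℂ} (J : Finset (Fin N))
    (hJ : ∀ i ∉ J, ∀ t, y t i = 0) : weight y ≤ J.card := by
  rw [weight_eq_card_trajSupport]
  refine Finset.card_le_card fun i hi => ?_
  obtain ⟨t, ht⟩ := mem_trajSupport.1 hi
  by_contra hiJ
  exact ht (hJ i hiJ t)

theorem one_le_weight {y : ℕ → Fin N → ℂ} (hy : y ≠ 0) : 1 ≤ weight y := by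
  obtain ⟨t, i, hti⟩ : ∃ t i, y t i ≠ 0 := by simpa [funext_iff] using hy
  rw [weight_eq_card_trajSupport, Nat.one_le_iff_ne_zero, Finset.card_ne_zero]
  exact ⟨i, mem_trajSupport.2 ⟨t, hti⟩⟩

theorem not_exists_mul_submatrix_trajSupport_eq_one {R : Matrix (Fin N) (Fin N) ℂ[X]}
    {y : ℕ → Fin N → ℂ} (hy : polyAct R y = 0) (hy0 : y ≠ 0) :
    ¬ ∃ S : Matrix (trajSupport y) (Fin N) ℂ[X],
      S * R.submatrix id ((↑) : trajSupport y → Fin N) = 1 := by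
  rintro ⟨S, hS⟩
  let f := (aeval (R := ℂ) (leftShift (K := ℂ))).toRingHom
  have hS' : S.map f * (R.map f).submatrix id ((↑) : trajSupport y → Fin N) = 1 := by
    rw [submatrix_map, ← Matrix.map_mul, hS, Matrix.map_one _ f.map_zero f.map_one]
  have hker : ((R.map f).submatrix id ((↑) : trajSupport y → Fin N)).smulVec
      (fun (j : trajSupport y) s => y s j) = 0 := by
    rw [Matrix.submatrix_val_smulVec (R.map f) (trajSupport y) (v := fun j s => y s j)]
    · funext i t
      exact (polyAct_apply R y t i).symm.trans (congrFun (congrFun hy t) i)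
    · intro j hj
      funext s
      by_contra h
      exact hj (mem_trajSupport.2 ⟨s, h⟩)
  have hcols := Matrix.eq_zero_of_smulVec_eq_zero hS' hker
  refine hy0 (funext fun t => funext fun i => ?_)
  by_contra h
  exact h (congrFun (congrFun hcols ⟨i, mem_trajSupport.2 ⟨t, h⟩⟩) t)

theorem exists_polyAct_eq_zero_weight_le (R : Matrix (Fin N) (Fin N) ℂ[X]) (J : Finset (Fin N))
    (hJ : ¬ ∃ S : Matrix J (Fin N) ℂ[X], S * R.submatrix id ((↑) : J → Fin N) = 1) :
    ∃ y : ℕ → Fin N → ℂ, polyAct R y = 0 ∧ y ≠ 0 ∧ weight y ≤ J.card := by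
  classical
  obtain ⟨x, v, hv0, hv⟩ := Matrix.exists_mulVec_eval_eq_zero_of_not_exists_mul_eq_one _ hJ
  let w : Fin N → ℂ := fun i => if h : i ∈ J then v ⟨i, h⟩ else 0
  have hw : ∀ i ∉ J, w i = 0 := fun i hi => dif_neg hi
  have hwv : (fun j : J => w j) = v := funext fun j => dif_pos j.2
  have hRw : R.map (eval x) *ᵥ w = 0 := by
    rw [← smulVec_eq_mulVec, ← (R.map (eval x)).submatrix_val_smulVec J hw, hwv,
      smulVec_eq_mulVec, submatrix_map]
    exact hv
  refine ⟨fun t i => x ^ t * w i, ?_, ?_,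
    weight_le_card_of_forall_notMem J fun i hi t => by simp [hw i hi]⟩
  · rw [polyAct_geometric, hRw]
    funext t i
    simp
  · intro h0
    refine hv0 (hwv ▸ funext fun j => ?_)
    simpa using congrFun (congrFun h0 0) j

end Trajectory

theorem secIndex_eq_min_not_left_unimodular_general {n N : ℕ} (A : Matrix (Fin n) (Fin n) ℂ)
    (C : Matrix (Fin N) (Fin n) ℂ)
    (R : Matrix (Fin N) (Fin N) (Polynomial ℂ))
    (hR : behavior A C = {y : ℕ → Fin N → ℂ | polyAct R y = 0}) :
    secIndex A C =
      sInf {L : ℕ | 1 ≤ L ∧ ∃ J : Finset (Fin N), J.card = L ∧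
        ¬ ∃ S : Matrix {j : Fin N // j ∈ J} (Fin N) (Polynomial ℂ),
            S * R.submatrix id (Subtype.val : {j : Fin N // j ∈ J} → Fin N) = 1} := by
  refine csInf_eq_csInf_of_forall_exists_le ?_ ?_
  · rintro _ ⟨y, hyB, hy0, rfl⟩
    have hy : polyAct R y = 0 := by rwa [hR] at hyB
    refine ⟨weight y, ⟨one_le_weight hy0, trajSupport y, (weight_eq_card_trajSupport y).symm,
      not_exists_mul_submatrix_trajSupport_eq_one hy hy0⟩, le_rfl⟩
  · rintro _ ⟨-, J, rfl, hJ⟩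
    obtain ⟨y, hy, hy0, hle⟩ := exists_polyAct_eq_zero_weight_le R J hJ
    exact ⟨weight y, ⟨y, hR ▸ hy, hy0, rfl⟩, hle⟩

/-- Theorem 5: if the behavior of Σ is the kernel of `R(σ)`, then `δ(Σ)` is the
smallest `L ∈ {1,…,N}` for which some column submatrix `R_J(ξ)` with `|J| = L`
is not left unimodular (has no polynomial left inverse). -/
theorem secIndex_eq_min_not_left_unimodular {n N : ℕ} (A : Matrix (Fin n) (Fin n) ℂ)
    (C : Matrix (Fin N) (Fin n) ℂ) (hobs : Observable A C)
    (R : Matrix (Fin N) (Fin N) (Polynomial ℂ))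
    (hR : behavior A C = {y : ℕ → Fin N → ℂ | polyAct R y = 0}) :
    secIndex A C =
      sInf {L : ℕ | 1 ≤ L ∧ ∃ J : Finset (Fin N), J.card = L ∧
        ¬ ∃ S : Matrix {j : Fin N // j ∈ J} (Fin N) (Polynomial ℂ),
            S * R.submatrix id (Subtype.val : {j : Fin N // j ∈ J} → Fin N) = 1} :=
  secIndex_eq_min_not_left_unimodular_general A C R hR
end

section
/- Let x₀ = α₁v₁ + α₂v₂ + ⋯ + α_m v_m, where each α_j ∈ ℂ is nonzero, each v_j ∈ ℂ^n is a nonzero eigenvector of A with A v_j = λ_j v_j, and the eigenvalues λ₁,…,λ_m are pairwise distinct. Let y be the trajectory in the behavior B of Σ corresponding to the initial condition x₀, i.e., y(t) = C A^t x₀. Then supp(y) = ⋃_{j=1}^m supp(C v_j), where for a vector w ∈ ℂ^N, supp(w) := { i ∈ {1,…,N} : w_i ≠ 0 }. -/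
open Matrix

/-!
Along the trajectory, `y(t)ᵢ = ∑ⱼ (αⱼ (C vⱼ)ᵢ) λⱼᵗ` is an exponential polynomial in `t`.
Since the `λⱼ` are distinct, the Vandermonde matrix of the first `m` times is invertible, so
this sequence vanishes identically iff every coefficient `αⱼ (C vⱼ)ᵢ` does, i.e. (as `αⱼ ≠ 0`)
iff `(C vⱼ)ᵢ = 0` for all `j`.
-/

section Trajectory

variable {R ι n p : Type*} [CommRing R] [Fintype ι] [Fintype n] [DecidableEq n]

theorem Matrix.pow_mulVec_of_mulVec_eq_smul {A : Matrix n n R} {v : n → R} {μ : R}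
    (h : A *ᵥ v = μ • v) (t : ℕ) : (A ^ t) *ᵥ v = μ ^ t • v := by
  induction t with
  | zero => simp
  | succ t ih =>
    rw [pow_succ', ← mulVec_mulVec, ih, mulVec_smul, h, smul_smul, pow_succ]

theorem Matrix.mul_pow_mulVec_sum_smul_eigenvectors (A : Matrix n n R) (C : Matrix p n R)
    {lam α : ι → R} {v : ι → n → R} (heig : ∀ j, A *ᵥ v j = lam j • v j) (t : ℕ) :
    (C * A ^ t) *ᵥ ∑ j, α j • v j = ∑ j, (α j * lam j ^ t) • C *ᵥ v j := by
  simp only [← mulVec_mulVec, mulVec_sum, mulVec_smul, pow_mulVec_of_mulVec_eq_smul (heig _),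
    smul_smul]

end Trajectory

theorem exists_sum_mul_pow_ne_zero_iff {K : Type*} [Field K] {m : ℕ} {lam : Fin m → K}
    (hlam : Function.Injective lam) (β : Fin m → K) :
    (∃ t : ℕ, ∑ j, β j * lam j ^ t ≠ 0) ↔ ∃ j, β j ≠ 0 := by
  constructor
  · rintro ⟨t, ht⟩
    by_contra! hβ
    exact ht (Finset.sum_eq_zero fun j _ => by rw [hβ j, zero_mul])
  · rintro ⟨j, hj⟩
    by_contra! hβ
    exact hj (congrFun (eq_zero_of_forall_pow_sum_mul_pow_eq_zero hlam fun t => hβ t) j)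

theorem supp_trajectory_eq_union_supp_eigen_general {n N m : ℕ}
    (A : Matrix (Fin n) (Fin n) ℂ) (C : Matrix (Fin N) (Fin n) ℂ)
    (lam : Fin m → ℂ) (hlam : Function.Injective lam)
    (α : Fin m → ℂ) (hα : ∀ j, α j ≠ 0)
    (v : Fin m → Fin n → ℂ)
    (heig : ∀ j, A.mulVec (v j) = lam j • v j)
    (x₀ : Fin n → ℂ) (hx₀ : x₀ = ∑ j, α j • v j)
    (y : ℕ → Fin N → ℂ) (hy : ∀ t, y t = (C * A ^ t).mulVec x₀) :
    {i : Fin N | ∃ t, y t i ≠ 0} = ⋃ j, {i : Fin N | C.mulVec (v j) i ≠ 0} := by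
  have hyt : ∀ t i, y t i = ∑ j, (α j * (C *ᵥ v j) i) * lam j ^ t := fun t i => by
    rw [hy, hx₀, mul_pow_mulVec_sum_smul_eigenvectors A C heig, Finset.sum_apply]
    exact Finset.sum_congr rfl fun j _ => by simp only [Pi.smul_apply, smul_eq_mul]; ring
  ext i
  simp only [Set.mem_ofPred_eq, Set.mem_iUnion, hyt, exists_sum_mul_pow_ne_zero_iff hlam,
    mul_ne_zero_iff, ne_eq, hα, not_false_eq_true, true_and]

/-- Lemma 1 (support lemma): if `x₀ = Σ_j α_j v_j` is a combination of
eigenvectors of `A` for pairwise distinct eigenvalues, with all `α_j ≠ 0`,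
and `y` is the trajectory of Σ with initial condition `x₀`, then
`supp(y) = ⋃_j supp(C v_j)`. -/
theorem supp_trajectory_eq_union_supp_eigen {n N m : ℕ}
    (A : Matrix (Fin n) (Fin n) ℂ) (C : Matrix (Fin N) (Fin n) ℂ)
    (lam : Fin m → ℂ) (hlam : Function.Injective lam)
    (α : Fin m → ℂ) (hα : ∀ j, α j ≠ 0)
    (v : Fin m → Fin n → ℂ) (hv : ∀ j, v j ≠ 0)
    (heig : ∀ j, A.mulVec (v j) = lam j • v j)
    (x₀ : Fin n → ℂ) (hx₀ : x₀ = ∑ j, α j • v j)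
    (y : ℕ → Fin N → ℂ) (hy : ∀ t, y t = (C * A ^ t).mulVec x₀) :
    {i : Fin N | ∃ t, y t i ≠ 0} = ⋃ j, {i : Fin N | C.mulVec (v j) i ≠ 0} :=
  supp_trajectory_eq_union_supp_eigen_general A C lam hlam α hα v heig x₀ hx₀ y hy
end

section
/- Suppose the system Σ is observable and the matrix A is diagonalizable: letting λ₁,…,λ_m be the distinct eigenvalues of A and V_j ⊆ ℂ^n the eigenspace of A for λ_j, suppose ℂ^n is spanned by V₁ ∪ ⋯ ∪ V_m. Then δ(Σ) = min over j ∈ {1,…,m} of the minimum over nonzero x ∈ V_j of |supp(C x)|, where for a vector w ∈ ℂ^N, supp(w) := { i ∈ {1,…,N} : w_i ≠ 0 }. -/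
open Matrix

lemma pow_mulVec_eig {n : ℕ} (A : Matrix (Fin n) (Fin n) ℂ) (x : Fin n → ℂ) (μ : ℂ)
    (h : A.mulVec x = μ • x) (t : ℕ) : (A ^ t).mulVec x = μ ^ t • x := by
  induction t with
  | zero => simp
  | succ t ih =>
    rw [pow_succ, ← mulVec_mulVec, h, mulVec_smul, ih, smul_smul, pow_succ, mul_comm]

lemma vdm_indep {m : ℕ} (lam : Fin m → ℂ) (hlam : Function.Injective lam)
    (c : Fin m → ℂ) (h : ∀ t : ℕ, ∑ j, lam j ^ t * c j = 0) : c = 0 := by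
  apply Matrix.eq_zero_of_mulVec_eq_zero (M := (Matrix.vandermonde lam)ᵀ)
  · rw [Matrix.det_transpose]
    exact Matrix.det_vandermonde_ne_zero_iff.mpr hlam
  · funext t
    simpa [Matrix.mulVec, dotProduct, Matrix.vandermonde] using h (t : ℕ)

/-- Theorem 6: if `A` is diagonalizable with distinct eigenvalues
`λ_1, …, λ_m` (and eigenspaces `V_j`), then
`δ(Σ) = min_j min_{0 ≠ x ∈ V_j} |supp(C x)|`. -/
theorem secIndex_eq_min_eigenspace_support {n N m : ℕ}
    (A : Matrix (Fin n) (Fin n) ℂ) (C : Matrix (Fin N) (Fin n) ℂ)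
    (hobs : Observable A C)
    (lam : Fin m → ℂ) (hlam : Function.Injective lam)
    (heigval : ∀ μ : ℂ, (∃ x : Fin n → ℂ, x ≠ 0 ∧ A.mulVec x = μ • x) ↔ ∃ j, μ = lam j)
    (hspan : ∀ x : Fin n → ℂ, ∃ w : Fin m → Fin n → ℂ,
      (∀ j, A.mulVec (w j) = lam j • w j) ∧ x = ∑ j, w j) :
    secIndex A C =
      sInf {d : ℕ | ∃ (j : Fin m) (x : Fin n → ℂ), x ≠ 0 ∧ A.mulVec x = lam j • x ∧
        d = Set.ncard {i : Fin N | C.mulVec x i ≠ 0}} := by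
  set SL := {w : ℕ | ∃ y ∈ behavior A C, y ≠ 0 ∧ w = weight y} with hSL
  set SR := {d : ℕ | ∃ (j : Fin m) (x : Fin n → ℂ), x ≠ 0 ∧ A.mulVec x = lam j • x ∧
        d = Set.ncard {i : Fin N | C.mulVec x i ≠ 0}} with hSR
  -- SR ⊆ SL
  have hRL : SR ⊆ SL := by
    rintro d ⟨j, x, hx, hAx, rfl⟩
    refine ⟨fun t => (C * A ^ t).mulVec x, ⟨x, fun t => rfl⟩, ?_, ?_⟩
    · intro h0
      apply hx
      apply hobs
      have h0' : ∀ t, (C * A ^ t).mulVec x = 0 := fun t => congrFun h0 t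
      funext t
      simp [h0' t]
    · unfold weight
      congr 1
      ext i
      simp only [Set.mem_setOf_eq]
      have hE : ∀ t : ℕ, (C * A ^ t).mulVec x i = lam j ^ t * C.mulVec x i := by
        intro t
        rw [← mulVec_mulVec, pow_mulVec_eig A x (lam j) hAx t, mulVec_smul]
        simp [Pi.smul_apply, smul_eq_mul]
      constructor
      · intro h
        exact ⟨0, by rw [hE 0]; simpa using h⟩
      · rintro ⟨t, ht⟩
        rw [hE t] at ht
        exact fun h => ht (by rw [h, mul_zero])
  -- every element of SL dominates some element of SR
  have hLR : ∀ w ∈ SL, ∃ d ∈ SR, d ≤ w := by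
    rintro w ⟨y, ⟨x₀, hy⟩, hy0, rfl⟩
    have hx₀ : x₀ ≠ 0 := by
      rintro rfl
      apply hy0
      funext t i
      simp [hy t]
    obtain ⟨wv, hwv, hsum⟩ := hspan x₀
    have hj : ∃ j, wv j ≠ 0 := by
      by_contra h
      push_neg at h
      apply hx₀
      rw [hsum]
      exact Finset.sum_eq_zero fun j _ => h j
    obtain ⟨j, hwj⟩ := hj
    have key : ∀ t i, y t i = ∑ k, lam k ^ t * C.mulVec (wv k) i := by
      intro t i
      have h1 : (A ^ t).mulVec x₀ = ∑ k, lam k ^ t • wv k := by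
        rw [hsum, show (A ^ t).mulVec (∑ k, wv k) = ∑ k, (A ^ t).mulVec (wv k) from
          map_sum ((A ^ t).mulVecLin) wv Finset.univ]
        exact Finset.sum_congr rfl fun k _ => pow_mulVec_eig A (wv k) (lam k) (hwv k) t
      have h2 : y t = ∑ k, lam k ^ t • C.mulVec (wv k) := by
        rw [hy t, ← mulVec_mulVec, h1,
          show C.mulVec (∑ k, lam k ^ t • wv k) = ∑ k, C.mulVec (lam k ^ t • wv k) from
            map_sum (C.mulVecLin) _ Finset.univ]
        exact Finset.sum_congr rfl fun k _ => by rw [mulVec_smul]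
      rw [h2]
      simp [Finset.sum_apply, Pi.smul_apply, smul_eq_mul]
    have hsub : {i : Fin N | C.mulVec (wv j) i ≠ 0} ⊆ {i : Fin N | ∃ t, y t i ≠ 0} := by
      intro i hi
      by_contra h
      simp only [Set.mem_setOf_eq, not_exists, not_not] at h
      have := vdm_indep lam hlam (fun k => C.mulVec (wv k) i)
        (fun t => by rw [← key t i]; exact h t)
      exact hi (congrFun this j)
    refine ⟨Set.ncard {i : Fin N | C.mulVec (wv j) i ≠ 0}, ⟨j, wv j, hwj, hwv j, rfl⟩, ?_⟩
    exact Set.ncard_le_ncard hsub (Set.toFinite _)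
  -- assemble
  unfold secIndex
  by_cases hL : SL.Nonempty
  · obtain ⟨d, hd, hdle⟩ := hLR _ (Nat.sInf_mem hL)
    refine le_antisymm ?_ ((Nat.sInf_le hd).trans hdle)
    exact Nat.sInf_le (hRL (Nat.sInf_mem ⟨d, hd⟩))
  · have hLe : SL = ∅ := Set.not_nonempty_iff_eq_empty.mp hL
    have hRe : SR = ∅ := by
      rw [Set.eq_empty_iff_forall_notMem]
      intro d hd
      exact hL ⟨d, hRL hd⟩
    rw [← hSL, hLe, hRe]
end

section
/- Suppose A ∈ ℂ^{n×n} is a diagonal matrix with pairwise distinct diagonal entries and the system Σ = (A, C) is observable. Then δ(Σ) equals the minimum over j ∈ {1,…,n} of the number of nonzero entries in the j-th column of C. In particular, Σ is maximally secure (δ(Σ) = N) if and only if every entry of C is nonzero. -/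
open Matrix

lemma vand_indep {n : ℕ} (d : Fin n → ℂ) (hd : Function.Injective d) (c : Fin n → ℂ)
    (h : ∀ t : ℕ, ∑ k, c k * d k ^ t = 0) : c = 0 := by
  have hdet : (Matrix.vandermonde d).det ≠ 0 := by
    rw [Matrix.det_vandermonde]
    refine Finset.prod_ne_zero_iff.mpr fun i _ => Finset.prod_ne_zero_iff.mpr fun j hj => ?_
    rw [Finset.mem_Ioi] at hj
    exact sub_ne_zero.mpr (fun e => hj.ne' (hd e))
  have hv : Matrix.vecMul c (Matrix.vandermonde d) = 0 := by
    funext t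
    simpa [Matrix.vecMul, dotProduct, Matrix.vandermonde] using h t
  exact Matrix.eq_zero_of_vecMul_eq_zero hdet hv

lemma traj_eq {n N : ℕ} (d : Fin n → ℂ) (C : Matrix (Fin N) (Fin n) ℂ)
    (x₀ : Fin n → ℂ) (t : ℕ) (i : Fin N) :
    ((C * (Matrix.diagonal d) ^ t).mulVec x₀) i = ∑ k, C i k * x₀ k * d k ^ t := by
  rw [Matrix.diagonal_pow]
  simp [Matrix.mulVec, dotProduct, Matrix.mul_diagonal]
  exact Finset.sum_congr rfl fun k _ => by ring

/-- If `A` is diagonal with pairwise distinct diagonal entries and Σ = (A, C)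
is observable, then `δ(Σ)` equals the minimum over `j ∈ {1,…,n}` of the number
of nonzero entries of the `j`-th column of `C`; in particular Σ is maximally
secure iff every entry of `C` is nonzero. -/
theorem secIndex_diagonal {n N : ℕ} (hn : 0 < n)
    (d : Fin n → ℂ) (hd : Function.Injective d)
    (C : Matrix (Fin N) (Fin n) ℂ) (hobs : Observable (Matrix.diagonal d) C) :
    secIndex (Matrix.diagonal d) C =
        sInf {w : ℕ | ∃ j : Fin n, w = Set.ncard {i : Fin N | C i j ≠ 0}} ∧
      (secIndex (Matrix.diagonal d) C = N ↔ ∀ (i : Fin N) (j : Fin n), C i j ≠ 0) := by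
  set A := Matrix.diagonal d with hA
  set S := {w : ℕ | ∃ y ∈ behavior A C, y ≠ 0 ∧ w = weight y} with hS
  set T := {w : ℕ | ∃ j : Fin n, w = Set.ncard {i : Fin N | C i j ≠ 0}} with hT
  -- column trajectories
  have hcol : ∀ j : Fin n, (Set.ncard {i : Fin N | C i j ≠ 0}) ∈ S := by
    intro j
    set y : ℕ → Fin N → ℂ := fun t => (C * A ^ t).mulVec (Pi.single j 1) with hydef
    have hy : ∀ t i, y t i = C i j * d j ^ t := by
      intro t i
      rw [hydef]
      simp only
      rw [traj_eq]
      rw [Finset.sum_eq_single j]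
      · simp
      · intro k _ hk; simp [Pi.single_eq_of_ne hk]
      · simp
    refine ⟨y, ⟨Pi.single j 1, fun t => rfl⟩, ?_, ?_⟩
    · intro h0
      have h1 : (Pi.single j 1 : Fin n → ℂ) = 0 := by
        apply hobs
        funext t
        show (C * A ^ t).mulVec (Pi.single j 1) = (C * A ^ t).mulVec 0
        rw [Matrix.mulVec_zero]
        exact congrFun h0 t
      have h2 := congrFun h1 j
      rw [Pi.single_eq_same] at h2
      exact one_ne_zero h2
    · unfold weight
      congr 1
      ext i
      simp only [Set.mem_setOf_eq, hy]
      constructor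
      · intro h; exact ⟨0, by simpa using h⟩
      · rintro ⟨t, ht⟩; exact left_ne_zero_of_mul ht
  have hTne : T.Nonempty := ⟨_, ⟨⟨0, hn⟩, rfl⟩⟩
  have hSne : S.Nonempty := ⟨_, hcol ⟨0, hn⟩⟩
  have key1 : secIndex A C = sInf T := by
    apply le_antisymm
    · exact le_csInf hTne (by rintro b ⟨j, rfl⟩; exact Nat.sInf_le (hcol j))
    · obtain ⟨y, ⟨x₀, hx⟩, hy0, hw⟩ := Nat.sInf_mem hSne
      have hx0 : x₀ ≠ 0 := by
        rintro rfl
        exact hy0 (funext fun t => by rw [hx t, Matrix.mulVec_zero]; rfl)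
      obtain ⟨j, hj'⟩ := Function.ne_iff.mp hx0
      have hj : x₀ j ≠ 0 := by simpa using hj'
      have hsub : {i : Fin N | C i j ≠ 0} ⊆ {i : Fin N | ∃ t, y t i ≠ 0} := by
        intro i hi
        by_contra hcon
        simp only [Set.mem_setOf_eq, not_exists, not_not] at hcon
        have hz : (fun k => C i k * x₀ k) = 0 := by
          apply vand_indep d hd
          intro t
          have hct := hcon t
          rw [hx t] at hct
          rw [← hct, traj_eq]
        have hcj := congrFun hz j
        simp only [Pi.zero_apply] at hcj
        rcases mul_eq_zero.mp hcj with h | h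
        · exact hi h
        · exact hj h
      have h2 : Set.ncard {i : Fin N | C i j ≠ 0} ≤ weight y :=
        Set.ncard_le_ncard hsub (Set.toFinite _)
      calc sInf T ≤ Set.ncard {i : Fin N | C i j ≠ 0} := Nat.sInf_le ⟨j, rfl⟩
        _ ≤ weight y := h2
        _ = secIndex A C := hw.symm
  have huniv : Set.ncard (Set.univ : Set (Fin N)) = N := by
    simp [Set.ncard_univ]
  refine ⟨key1, ?_⟩
  rw [key1]
  constructor
  · intro h i j
    have h1 : sInf T ≤ Set.ncard {i : Fin N | C i j ≠ 0} := Nat.sInf_le ⟨j, rfl⟩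
    rw [h] at h1
    have h2 : {i : Fin N | C i j ≠ 0} = Set.univ :=
      Set.eq_of_subset_of_ncard_le (Set.subset_univ _) (by rw [huniv]; exact h1)
    have h3 : i ∈ {i : Fin N | C i j ≠ 0} := h2 ▸ Set.mem_univ i
    exact h3
  · intro h
    have hall : ∀ w ∈ T, w = N := by
      rintro w ⟨j, rfl⟩
      rw [show {i : Fin N | C i j ≠ 0} = Set.univ from Set.eq_univ_of_forall fun i => h i j]
      exact huniv
    apply le_antisymm
    · obtain ⟨w, hw⟩ := hTne
      have := Nat.sInf_le hw
      rwa [hall w hw] at this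
    · exact le_csInf hTne fun w hw => (hall w hw).ge
end

section
/- Let y and ỹ be two trajectories in the behavior B of the system Σ with A ∈ ℂ^{n×n}. If y(t) = ỹ(t) for all t ∈ {0,1,…,n−1}, then y = ỹ. In other words, the behavior B is autonomous: every trajectory in B is uniquely determined by its first n values. -/
open Matrix Polynomial

private lemma key {n N : ℕ} (A : Matrix (Fin n) (Fin n) ℂ) (C : Matrix (Fin N) (Fin n) ℂ)
    (d : Fin n → ℂ) (h : ∀ t < n, (C * A ^ t).mulVec d = 0) (k : ℕ) :
    (C * A ^ k).mulVec d = 0 := by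
  rcases Nat.eq_zero_or_pos n with hn | hn
  · subst hn
    funext j
    simp [mulVec, dotProduct]
  have hch : (charpoly A) ≠ 1 := by
    intro h1
    have := A.charpoly_natDegree_eq_dim
    rw [h1] at this
    simp at this
    omega
  have hdeg : (X ^ k %ₘ charpoly A).natDegree < n := by
    have := Polynomial.natDegree_modByMonic_lt (X ^ k : ℂ[X]) A.charpoly_monic hch
    simpa using this
  have hpow : A ^ k = aeval A (X ^ k %ₘ charpoly A) := by
    simpa using Matrix.pow_eq_aeval_mod_charpoly A k
  rw [hpow, Polynomial.aeval_eq_sum_range' hdeg]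
  have hs : ∀ (s : Finset ℕ) (f : ℕ → Matrix (Fin N) (Fin n) ℂ),
      (∑ i ∈ s, f i) *ᵥ d = ∑ i ∈ s, f i *ᵥ d := by
    intro s f
    induction s using Finset.cons_induction with
    | empty => simp
    | cons a s ha ih => rw [Finset.sum_cons, Finset.sum_cons, Matrix.add_mulVec, ih]
  rw [Matrix.mul_sum, hs]
  refine Finset.sum_eq_zero fun i hi => ?_
  rw [Matrix.mul_smul, Matrix.smul_mulVec, h i (Finset.mem_range.mp hi), smul_zero]



/-- The behavior `B` is autonomous: any two trajectories of Σ that agree on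
the first `n` time instances are equal. -/
theorem behavior_autonomous {n N : ℕ} (A : Matrix (Fin n) (Fin n) ℂ)
    (C : Matrix (Fin N) (Fin n) ℂ)
    (y ytilde : ℕ → Fin N → ℂ) (hy : y ∈ behavior A C) (hyt : ytilde ∈ behavior A C)
    (hagree : ∀ t < n, y t = ytilde t) :
    y = ytilde := by
  obtain ⟨x₀, hx⟩ := hy
  obtain ⟨x₁, hx'⟩ := hyt
  have h : ∀ t < n, (C * A ^ t).mulVec (x₀ - x₁) = 0 := by
    intro t ht
    rw [Matrix.mulVec_sub, sub_eq_zero, ← hx, ← hx', hagree t ht]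
  funext t
  have := key A C (x₀ - x₁) h t
  rw [Matrix.mulVec_sub, sub_eq_zero] at this
  rw [hx, hx', this]
end
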